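/- arXiv:1910.12026 — 5 statements merged into one kernel-verified Lean document; each statement's English description precedes it below -/
import Mathlib

section
/- Let G be a simple graph on a finite vertex type V and let k be a natural number. Let u : (V × Bool) → (V × Bool) → ℝ be a symmetric function such that for all distinct a, b ∈ V × Bool: u(a,b) = −1 if the first coordinates of a and b are equal or are adjacent in G, and u(a,b) ≥ 0 otherwise. Then the following are equivalent: (i) there exists a finite set A ⊆ V × Bool such that the number of elements of A with second coordinate true equals the number of elements with second coordinate false, this common number is at most k, and the sum of u over all unordered pairs of distinct elements of A is at most −k·(2k−1); (ii) G contains a clique on k vertices. -/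
/-!
A set `A` of ions has `#A (#A - 1)` ordered pairs of distinct ions, each of energy at least `-1`,
so its total energy is at least `-#A (#A - 1) / 2`, with equality exactly when all its ions are
pairwise close. A neutral set with at most `k` positive ions has `#A = 2m` with `m ≤ k`, so the
bound `-k (2k - 1)` can only be met when `m = k` and the ions are pairwise close; their vertices
then form a clique with at least `m` vertices, since each vertex carries at most two ions.
Conversely, both ions of every vertex of a `k`-clique form a neutral set meeting the bound.
-/

open Finset

section Energy

variable {α : Type*} {r : α → α → Prop} {u : α → α → ℝ}

theorem eq_neg_one_of_sum_le_neg_card {ι : Type*} {s : Finset ι} {f : ι → ℝ}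
    (hf : ∀ i ∈ s, -1 ≤ f i) (hsum : ∑ i ∈ s, f i ≤ -(#s : ℝ)) :
    ∀ i ∈ s, f i = -1 := by
  have hzero : ∑ i ∈ s, (f i + 1) = 0 := by
    have hge : 0 ≤ ∑ i ∈ s, (f i + 1) := sum_nonneg fun i hi => by linarith [hf i hi]
    rw [sum_add_distrib, sum_const, nsmul_one] at hge ⊢
    linarith
  intro i hi
  linarith [(sum_eq_zero_iff_of_nonneg fun j hj => by linarith [hf j hj]).1 hzero i hi]

theorem neg_one_le_of_energy (hneg : ∀ a b, a ≠ b → r a b → u a b = -1)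
    (hpos : ∀ a b, a ≠ b → ¬r a b → 0 ≤ u a b) {a b : α} (hab : a ≠ b) :
    -1 ≤ u a b := by
  by_cases h : r a b
  · exact (hneg a b hab h).ge
  · linarith [hpos a b hab h]

theorem neg_card_offDiag_le_sum_energy [DecidableEq α]
    (hneg : ∀ a b, a ≠ b → r a b → u a b = -1)
    (hpos : ∀ a b, a ≠ b → ¬r a b → 0 ≤ u a b) (A : Finset α) :
    -(#A.offDiag : ℝ) ≤ ∑ p ∈ A.offDiag, u p.1 p.2 := by
  calc -(#A.offDiag : ℝ) = ∑ _p ∈ A.offDiag, (-1 : ℝ) := by simp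
    _ ≤ _ := sum_le_sum fun p hp =>
      neg_one_le_of_energy hneg hpos (mem_offDiag.1 hp).2.2

theorem pairwise_of_sum_energy_le [DecidableEq α]
    (hneg : ∀ a b, a ≠ b → r a b → u a b = -1)
    (hpos : ∀ a b, a ≠ b → ¬r a b → 0 ≤ u a b) {A : Finset α}
    (hsum : ∑ p ∈ A.offDiag, u p.1 p.2 ≤ -(#A.offDiag : ℝ)) : (A : Set α).Pairwise r := by
  have htight := eq_neg_one_of_sum_le_neg_card
    (fun p hp => neg_one_le_of_energy hneg hpos (mem_offDiag.1 hp).2.2) hsum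
  intro a ha b hb hab
  by_contra h
  have hpair : (a, b) ∈ A.offDiag := mem_offDiag.2 ⟨ha, hb, hab⟩
  linarith [hpos a b hab h, htight _ hpair]

theorem sum_energy_of_pairwise [DecidableEq α]
    (hneg : ∀ a b, a ≠ b → r a b → u a b = -1) {A : Finset α}
    (hA : (A : Set α).Pairwise r) :
    ∑ p ∈ A.offDiag, u p.1 p.2 = -(#A.offDiag : ℝ) := by
  have hclose : ∀ p ∈ A.offDiag, u p.1 p.2 = -1 := fun p hp => by
    obtain ⟨h1, h2, hne⟩ := mem_offDiag.1 hp
    exact hneg p.1 p.2 hne (hA h1 h2 hne)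
  simp [sum_congr rfl hclose]

end Energy

theorem Finset.cast_card_offDiag {α : Type*} [DecidableEq α] (s : Finset α) :
    (#s.offDiag : ℝ) = #s * (#s - 1) := by
  rw [offDiag_card, Nat.cast_sub (Nat.le_mul_self _)]
  push_cast
  ring

theorem Nat.eq_of_le_of_mul_two_mul_sub_one_le {m k : ℕ} (hmk : m ≤ k)
    (h : (k : ℝ) * (2 * k - 1) ≤ m * (2 * m - 1)) : m = k := by
  by_contra hne
  have hlt : (m : ℝ) + 1 ≤ k := by exact_mod_cast lt_of_le_of_ne hmk hne
  nlinarith [(m.cast_nonneg : (0 : ℝ) ≤ m)]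

section Ions

variable {V : Type*}

theorem card_eq_two_mul_card_filter_true {A : Finset (V × Bool)}
    (hA : #(A.filter fun p => p.2 = true) = #(A.filter fun p => p.2 = false)) :
    #A = 2 * #(A.filter fun p => p.2 = true) := by
  have h := card_filter_add_card_filter_not (s := A) (p := fun p => p.2 = true)
  simp only [Bool.not_eq_true] at h
  omega

theorem card_le_two_mul_card_image_fst [DecidableEq V] (A : Finset (V × Bool)) :
    #A ≤ 2 * #(A.image Prod.fst) := by
  calc #A ≤ #(A.image Prod.fst ×ˢ A.image Prod.snd) := card_le_card subset_product
    _ ≤ #(A.image Prod.fst) * #(univ : Finset Bool) := by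
      rw [card_product]
      exact Nat.mul_le_mul_left _ (card_le_univ _)
    _ = 2 * #(A.image Prod.fst) := by simp [mul_comm]

theorem SimpleGraph.isClique_image_fst [DecidableEq V] {G : SimpleGraph V}
    {A : Finset (V × Bool)}
    (hA : (A : Set (V × Bool)).Pairwise fun a b => a.1 = b.1 ∨ G.Adj a.1 b.1) :
    G.IsClique (A.image Prod.fst : Set V) := by
  intro v hv w hw hvw
  simp only [coe_image, Set.mem_image, mem_coe] at hv hw
  obtain ⟨a, ha, rfl⟩ := hv
  obtain ⟨b, hb, rfl⟩ := hw
  exact (hA ha hb fun hab => hvw (congrArg Prod.fst hab)).resolve_left hvw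

theorem SimpleGraph.IsClique.pairwise_product_univ {G : SimpleGraph V} {S : Finset V}
    (hS : G.IsClique (S : Set V)) :
    ((S ×ˢ univ : Finset (V × Bool)) : Set (V × Bool)).Pairwise
      fun a b => a.1 = b.1 ∨ G.Adj a.1 b.1 := by
  intro a ha b hb _
  by_cases h : a.1 = b.1
  · exact Or.inl h
  · exact Or.inr (hS (mem_product.1 ha).1 (mem_product.1 hb).1 h)

theorem card_filter_snd_product_univ (S : Finset V) (b : Bool) :
    #((S ×ˢ univ : Finset (V × Bool)).filter fun p => p.2 = b) = #S := by
  have hfilter : ((S ×ˢ univ : Finset (V × Bool)).filter fun p => p.2 = b) = S ×ˢ {b} := by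
    ext ⟨v, c⟩
    simp [eq_comm]
  rw [hfilter, card_product, card_singleton, mul_one]

end Ions

theorem kChargeRemoval_clique_reduction_general {V : Type*} [DecidableEq V]
    (G : SimpleGraph V) (k : ℕ) (u : V × Bool → V × Bool → ℝ)
    (hneg : ∀ a b : V × Bool, a ≠ b → (a.1 = b.1 ∨ G.Adj a.1 b.1) → u a b = -1)
    (hpos : ∀ a b : V × Bool, a ≠ b → ¬(a.1 = b.1 ∨ G.Adj a.1 b.1) → 0 ≤ u a b) :
    (∃ A : Finset (V × Bool),
        (A.filter fun p => p.2 = true).card = (A.filter fun p => p.2 = false).card ∧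
        (A.filter fun p => p.2 = true).card ≤ k ∧
        (∑ p ∈ A.offDiag, u p.1 p.2) / 2 ≤ -((k : ℝ) * (2 * (k : ℝ) - 1))) ↔
      ∃ S : Finset V, G.IsNClique k S := by
  constructor
  · rintro ⟨A, hneutral, hmk, henergy⟩
    set m := #(A.filter fun p => p.2 = true)
    have hcard : #A = 2 * m := card_eq_two_mul_card_filter_true hneutral
    have hoff : (#A.offDiag : ℝ) = 2 * m * (2 * m - 1) := by
      rw [cast_card_offDiag, hcard]; push_cast; ring
    have hlower := neg_card_offDiag_le_sum_energy hneg hpos A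
    have hm : m = k := Nat.eq_of_le_of_mul_two_mul_sub_one_le hmk (by linarith)
    have hclose := pairwise_of_sum_energy_le hneg hpos (A := A) (by rw [hoff, hm]; linarith)
    have hk : k ≤ #(A.image Prod.fst) := by
      have := card_le_two_mul_card_image_fst A
      omega
    obtain ⟨S, hS, hSk⟩ := exists_subset_card_eq hk
    exact ⟨S, (SimpleGraph.isClique_image_fst hclose).subset (by exact_mod_cast hS), hSk⟩
  · rintro ⟨S, hclique, hSk⟩
    refine ⟨S ×ˢ univ, ?_, ?_, ?_⟩
    · rw [card_filter_snd_product_univ, card_filter_snd_product_univ]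
    · rw [card_filter_snd_product_univ, hSk]
    · rw [sum_energy_of_pairwise hneg hclique.pairwise_product_univ, cast_card_offDiag,
        card_product, card_univ, Fintype.card_bool, hSk]
      push_cast
      linarith

/-- Correctness of the reduction from `clique` to `k`-charge removal for controllable
energy functions.  Every vertex `v` of `G` is doubled into a positive ion `(v, true)` and
a negative ion `(v, false)`; the pairwise energy `u` is `−1` between ions representing
equal or adjacent vertices of `G` and nonnegative otherwise.  Then there is a neutral set
`A` of at most `k` positive (and as many negative) ions whose total energy, summed over
unordered pairs of distinct ions, is at most `−k·(2k−1)` iff `G` has a clique on `k`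
vertices. -/
theorem kChargeRemoval_clique_reduction {V : Type*} [Fintype V] [DecidableEq V]
    (G : SimpleGraph V) (k : ℕ) (u : V × Bool → V × Bool → ℝ)
    (hsymm : ∀ a b, u a b = u b a)
    (hneg : ∀ a b : V × Bool, a ≠ b → (a.1 = b.1 ∨ G.Adj a.1 b.1) → u a b = -1)
    (hpos : ∀ a b : V × Bool, a ≠ b → ¬(a.1 = b.1 ∨ G.Adj a.1 b.1) → 0 ≤ u a b) :
    (∃ A : Finset (V × Bool),
        (A.filter fun p => p.2 = true).card = (A.filter fun p => p.2 = false).card ∧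
        (A.filter fun p => p.2 = true).card ≤ k ∧
        (∑ p ∈ A.offDiag, u p.1 p.2) / 2 ≤ -((k : ℝ) * (2 * (k : ℝ) - 1))) ↔
      ∃ S : Finset V, G.IsNClique k S :=
  kChargeRemoval_clique_reduction_general G k u hneg hpos
end

section
/- Let α and β be types, let U : (α ⊕ β) → (α ⊕ β) → ℝ be a symmetric function, let A be a finite subset of α with |A| = k′ where k′ ≥ 2, and let φ : α → β be injective on A. Then the sum over all unordered pairs {a,b} of distinct elements of A of the quantity U(a,b) + U(φ a, φ b) + U(a, φ b) + U(b, φ a) + (U(a, φ a) + U(b, φ b))/(k′ − 1) is equal to the sum of U(x,y) over all unordered pairs {x,y} of distinct elements of the (2k′)-element subset of α ⊕ β consisting of the elements of A (via the left inclusion) together with the elements of φ(A) (via the right inclusion). -/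
lemma sum_offDiag_eq' {γ : Type*} [DecidableEq γ] (s : Finset γ) (f : γ × γ → ℝ) :
    ∑ p ∈ s.offDiag, f p = (∑ a ∈ s, ∑ b ∈ s, f (a, b)) - ∑ a ∈ s, f (a, a) := by
  have h : ∑ p ∈ s.diag ∪ s.offDiag, f p = ∑ p ∈ s.diag, f p + ∑ p ∈ s.offDiag, f p :=
    Finset.sum_union (Finset.disjoint_diag_offDiag s)
  rw [Finset.diag_union_offDiag, Finset.sum_product, Finset.sum_diag] at h
  linarith

/-- Counting identity for the reduction of `k`-charge removal to max-weight `k`-clique: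
for a symmetric pairwise energy `U` on ions `α ⊕ β`, a set `A` of `k′ ≥ 2` positive ions
and an injective-on-`A` pairing `φ : α → β` with negative ions, the sum over unordered
pairs `{a,b}` of distinct elements of `A` of
`U(a,b) + U(φa,φb) + U(a,φb) + U(b,φa) + (U(a,φa) + U(b,φb))/(k′−1)`
equals the sum of `U` over unordered pairs of distinct elements of the `2k′`-element set
`A ⊕ φ(A)`. -/
theorem kChargeRemoval_maxWeightClique_counting {α β : Type*} [DecidableEq α]
    [DecidableEq β] (U : α ⊕ β → α ⊕ β → ℝ) (hU : ∀ a b, U a b = U b a)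
    (k' : ℕ) (hk' : 2 ≤ k') (A : Finset α) (hA : A.card = k')
    (φ : α → β) (hφ : Set.InjOn φ (A : Set α)) :
    (A.image Sum.inl ∪ A.image fun a => Sum.inr (φ a) : Finset (α ⊕ β)).card = 2 * k' ∧
      (∑ p ∈ A.offDiag,
          (U (Sum.inl p.1) (Sum.inl p.2) + U (Sum.inr (φ p.1)) (Sum.inr (φ p.2)) +
            U (Sum.inl p.1) (Sum.inr (φ p.2)) + U (Sum.inl p.2) (Sum.inr (φ p.1)) +
            (U (Sum.inl p.1) (Sum.inr (φ p.1)) + U (Sum.inl p.2) (Sum.inr (φ p.2))) /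
              ((k' : ℝ) - 1))) / 2 =
        (∑ p ∈ (A.image Sum.inl ∪ A.image fun a => Sum.inr (φ a) : Finset (α ⊕ β)).offDiag,
          U p.1 p.2) / 2 := by
  have hinj1 : Set.InjOn (Sum.inl : α → α ⊕ β) A := fun x _ y _ h => Sum.inl.inj h
  have hinj2 : Set.InjOn (fun a => (Sum.inr (φ a) : α ⊕ β)) A := fun x hx y hy h =>
    hφ hx hy (Sum.inr.inj h)
  have hdisj : Disjoint (A.image Sum.inl) (A.image fun a => (Sum.inr (φ a) : α ⊕ β)) := by
    simp [Finset.disjoint_left]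
  have hsumS : ∀ h : α ⊕ β → ℝ,
      ∑ x ∈ (A.image Sum.inl ∪ A.image fun a => Sum.inr (φ a)), h x =
        ∑ a ∈ A, h (Sum.inl a) + ∑ a ∈ A, h (Sum.inr (φ a)) := by
    intro h
    rw [Finset.sum_union hdisj, Finset.sum_image hinj1, Finset.sum_image hinj2]
  constructor
  · rw [Finset.card_union_of_disjoint hdisj, Finset.card_image_of_injOn hinj1,
      Finset.card_image_of_injOn hinj2, hA]
    ring
  · have hk : ((k' : ℝ) - 1) ≠ 0 := by
      have : (2 : ℝ) ≤ (k' : ℝ) := by exact_mod_cast hk'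
      linarith
    rw [sum_offDiag_eq', sum_offDiag_eq']
    rw [hsumS]
    simp only [hsumS]
    have swap1 : ∑ a ∈ A, ∑ b ∈ A, U (Sum.inl b) (Sum.inr (φ a)) =
        ∑ a ∈ A, ∑ b ∈ A, U (Sum.inl a) (Sum.inr (φ b)) := Finset.sum_comm
    have swap2 : ∀ a b, U (Sum.inr (φ a)) (Sum.inl b) = U (Sum.inl b) (Sum.inr (φ a)) :=
      fun a b => hU _ _
    simp only [swap2]
    simp only [add_div, Finset.sum_add_distrib, Finset.sum_div, swap1, Finset.sum_const, hA,
      nsmul_eq_mul]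
    simp only [div_eq_mul_inv, ← Finset.mul_sum, ← Finset.sum_mul]
    field_simp
    ring
end

section
/- Let m ≥ 1 and let s : Fin m → ℕ satisfy s i ≥ 1 for all i; let Σ = ∑ᵢ s i, let k be a natural number with 0 < k < Σ, and set k′ = max(k, Σ − k). Consider the two negative magnitudes ν₀ = k and ν₁ = Σ − k. Then the following are equivalent: (i) there exist P ⊆ Fin m and Q ⊆ {0,1} with (P, Q) ≠ (Fin m, {0,1}) such that ∑_{i∈P} s i = ∑_{j∈Q} ν_j and ∑_{i∈P} s i ≥ k′; (ii) there exists T ⊆ Fin m with ∑_{i∈T} s i = k. -/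
/-!
A neutral sub-collection pairs a set `P` of positive charges with a set `Q` of the two negative
charges `k` and `Σ − k`. If `Q` is empty, `P` carries `0 ≥ k`. If `Q` is everything, `P` carries
all of `Σ` and, the charges being positive, is everything too. So in a proper one with `k ≠ 0`,
`Q` is a single negative charge, and then `P` or its complement sums to `k`. Conversely, a subset
summing to `k` or its complement, paired with the larger negative charge, is such a
sub-collection.
-/

open Finset

section

variable {ι : Type*} [Fintype ι]

theorem Finset.sum_lt_sum_univ_of_ne_univ {f : ι → ℕ} (hf : ∀ i, 0 < f i) {P : Finset ι}
    (hP : P ≠ univ) : ∑ i ∈ P, f i < ∑ i, f i := by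
  obtain ⟨i, hi⟩ := not_forall.1 (mt eq_univ_of_forall hP)
  exact sum_lt_sum_of_subset (subset_univ P) (mem_univ i) hi (hf i) fun j _ _ => Nat.zero_le _

theorem Finset.exists_sum_eq_sub_of_exists_sum_eq {f : ι → ℕ} {k : ℕ}
    (h : ∃ T : Finset ι, ∑ i ∈ T, f i = k) : ∃ T : Finset ι, ∑ i ∈ T, f i = ∑ i, f i - k := by
  classical
  obtain ⟨T, rfl⟩ := h
  exact ⟨Tᶜ, by rw [← sum_compl_add_sum T f, Nat.add_sub_cancel]⟩

theorem Fin.finset_two_cases (Q : Finset (Fin 2)) : Q = ∅ ∨ Q = {0} ∨ Q = {1} ∨ Q = univ := by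
  revert Q
  decide

def IsProperNeutralSubcollection (s : ι → ℕ) (k : ℕ) (P : Finset ι) (Q : Finset (Fin 2)) :
    Prop :=
  ¬(P = univ ∧ Q = univ) ∧
    ∑ i ∈ P, s i = ∑ j ∈ Q, ![k, (∑ i, s i) - k] j ∧
    max k ((∑ i, s i) - k) ≤ ∑ i ∈ P, s i

variable {s : ι → ℕ} {k : ℕ}

theorem IsProperNeutralSubcollection.exists_sum_eq (hs : ∀ i, 0 < s i) {P : Finset ι}
    {Q : Finset (Fin 2)} (h : IsProperNeutralSubcollection s k P Q) :
    ∃ T : Finset ι, ∑ i ∈ T, s i = k := by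
  obtain ⟨hproper, hneutral, hheavy⟩ := h
  have hle : ∑ i ∈ P, s i ≤ ∑ i, s i := sum_le_sum_of_subset (subset_univ P)
  rcases Fin.finset_two_cases Q with rfl | rfl | rfl | rfl
  · simp only [sum_empty] at hneutral
    exact ⟨∅, by rw [sum_empty]; omega⟩
  · exact ⟨P, by simpa using hneutral⟩
  · simp only [sum_singleton, Matrix.cons_val_one, Matrix.cons_val_zero] at hneutral
    obtain ⟨T, hT⟩ := exists_sum_eq_sub_of_exists_sum_eq ⟨P, hneutral⟩
    exact ⟨T, by omega⟩
  · have hlt := sum_lt_sum_univ_of_ne_univ hs fun hP => hproper ⟨hP, rfl⟩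
    simp only [Fin.sum_univ_two, Matrix.cons_val_one, Matrix.cons_val_zero] at hneutral
    omega

theorem exists_isProperNeutralSubcollection_of_exists_sum_eq
    (h : ∃ T : Finset ι, ∑ i ∈ T, s i = k) :
    ∃ (P : Finset ι) (Q : Finset (Fin 2)), IsProperNeutralSubcollection s k P Q := by
  obtain ⟨T, hT⟩ := h
  by_cases hmax : ∑ i, s i - k ≤ k
  · exact ⟨T, {0}, fun h => absurd h.2 (by decide), by simp [hT], by simp [hT, hmax]⟩
  · obtain ⟨U, hU⟩ := exists_sum_eq_sub_of_exists_sum_eq ⟨T, hT⟩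
    exact ⟨U, {1}, fun h => absurd h.2 (by decide), by simp [hU], by simp [hU]; omega⟩

end

theorem minimal_verification_subsetSum_general (m : ℕ) (s : Fin m → ℕ)
    (hs : ∀ i, 1 ≤ s i) (k : ℕ) :
    (∃ (P : Finset (Fin m)) (Q : Finset (Fin 2)),
        ¬(P = Finset.univ ∧ Q = Finset.univ) ∧
        ∑ i ∈ P, s i = ∑ j ∈ Q, ![k, (∑ i, s i) - k] j ∧
        max k ((∑ i, s i) - k) ≤ ∑ i ∈ P, s i) ↔
      ∃ T : Finset (Fin m), ∑ i ∈ T, s i = k :=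
  ⟨fun ⟨_, _, h⟩ => IsProperNeutralSubcollection.exists_sum_eq hs h,
    exists_isProperNeutralSubcollection_of_exists_sum_eq⟩

/-- Combinatorial core of the NP-hardness of verifying minimality of an
at-least-`k`-charge set.  Positive charges are `s i` for `i : Fin m` and the two negative
charges have magnitudes `ν₀ = k` and `ν₁ = Σ − k` where `Σ = ∑ i, s i`; with
`k′ = max(k, Σ − k)`, the full collection admits a proper neutral sub-collection whose
positive charge sum is at least `k′` iff the subset-sum instance `(s, k)` is solvable. -/
theorem minimal_verification_subsetSum (m : ℕ) (hm : 1 ≤ m) (s : Fin m → ℕ)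
    (hs : ∀ i, 1 ≤ s i) (k : ℕ) (hk : 0 < k) (hkS : k < ∑ i, s i) :
    (∃ (P : Finset (Fin m)) (Q : Finset (Fin 2)),
        ¬(P = Finset.univ ∧ Q = Finset.univ) ∧
        ∑ i ∈ P, s i = ∑ j ∈ Q, ![k, (∑ i, s i) - k] j ∧
        max k ((∑ i, s i) - k) ≤ ∑ i ∈ P, s i) ↔
      ∃ T : Finset (Fin m), ∑ i ∈ T, s i = k :=
  minimal_verification_subsetSum_general m s hs k
end

section
/- Let m ≥ 1, and let w, p : Fin m → ℕ with w i ≥ 1 and p i ≥ 1 for all i; let W = maxᵢ w i, let c and g be natural numbers, and let u be a real with 0 < u ≤ 1/2. Let y : Fin m → Bool → ℝ³ be a placement of ions, where ion (i, false) carries charge +(w i) and ion (i, true) carries charge −(w i), such that dist(y i false, y i true) = (w i)²/(p i) for every i, and dist(y i b, y j b′) ≥ α for all i ≠ j and all b, b′, where α > 0 satisfies 4·m²·W²/α < u. For T ⊆ Fin m, let E(T) denote the sum of Coulomb energies q_a·q_b/dist(a,b) over all unordered pairs of distinct ions a, b belonging to indices in T. Then the following are equivalent: (i) there exists T ⊆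 Fin m with ∑_{i∈T} w i ≤ c and E(T) ≤ −g + u; (ii) there exists T ⊆ Fin m with ∑_{i∈T} w i ≤ c and ∑_{i∈T} p i ≥ g. -/
/-- The charge of ion `(i, b)`: `+(w i)` for `b = false` (positive ion) and `−(w i)` for
`b = true` (negative ion). -/
noncomputable def ionCharge {m : ℕ} (w : Fin m → ℕ) (q : Fin m × Bool) : ℝ :=
  if q.2 then -(w q.1 : ℝ) else (w q.1 : ℝ)

/-- The total Coulomb energy of the ions with indices in `T`: the sum of
`q_a·q_b/dist(a,b)` over all unordered pairs of distinct ions `a`, `b` with indices in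
`T` (realised as half the sum over ordered pairs of distinct ions). -/
noncomputable def coulombEnergy {m : ℕ} (w : Fin m → ℕ)
    (y : Fin m → Bool → EuclideanSpace ℝ (Fin 3)) (T : Finset (Fin m)) : ℝ :=
  (∑ p ∈ (T ×ˢ (Finset.univ : Finset Bool)).offDiag,
      ionCharge w p.1 * ionCharge w p.2 / dist (y p.1.1 p.1.2) (y p.2.1 p.2.2)) / 2

/-!
In the ordered-pair sum defining the energy, the two ions of item `i` contribute `-p i`
twice, while each of the at most `4 m²` cross pairs contributes at most `W² / α` in absolute
value. Hence `E(T)` lies within `u / 2` of `-∑_{i ∈ T} p i`, and since the values are integers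
and `u ≤ 1/2`, `E(T) ≤ -g + u` holds exactly when `g ≤ ∑_{i ∈ T} p i`.
-/

open Finset

lemma Finset.sum_offDiag_prod_bool_filter_fst_eq {ι M : Type*} [DecidableEq ι] [AddCommMonoid M]
    (T : Finset ι) (f : (ι × Bool) × (ι × Bool) → M) :
    ∑ q ∈ (T ×ˢ univ).offDiag with q.1.1 = q.2.1, f q =
      ∑ i ∈ T, (f ((i, false), (i, true)) + f ((i, true), (i, false))) := by
  have himage : ((T ×ˢ univ).offDiag.filter fun q => q.1.1 = q.2.1) =
      (T ×ˢ univ).image fun a => (a, (a.1, !a.2)) := by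
    ext ⟨⟨i, b⟩, ⟨j, b'⟩⟩
    simp only [mem_filter, mem_offDiag, mem_product, mem_univ, and_true, mem_image,
      Prod.mk.injEq, Prod.exists]
    constructor
    · rintro ⟨⟨hi, -, hne⟩, rfl⟩
      refine ⟨i, b, hi, ⟨rfl, rfl⟩, rfl, ?_⟩
      cases b <;> cases b' <;> simp_all
    · rintro ⟨i, b, hi, ⟨rfl, rfl⟩, rfl, rfl⟩
      simp [hi]
  rw [himage, sum_image (fun a _ b _ h => (Prod.ext_iff.mp h).1), sum_product]
  simp [add_comm]

lemma Finset.card_offDiag_prod_bool_le {ι : Type*} [Fintype ι] (T : Finset ι) :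
    #(T ×ˢ (univ : Finset Bool)).offDiag ≤ 4 * Fintype.card ι ^ 2 := by
  have hT : #(T ×ˢ (univ : Finset Bool)) ≤ 2 * Fintype.card ι := by
    rw [card_product, card_univ, Fintype.card_bool, mul_comm]
    exact Nat.mul_le_mul_left 2 (card_le_univ T)
  calc #(T ×ˢ (univ : Finset Bool)).offDiag
      ≤ #(T ×ˢ (univ : Finset Bool)) * #(T ×ˢ (univ : Finset Bool)) :=
        offDiag_card _ ▸ Nat.sub_le _ _
    _ ≤ (2 * Fintype.card ι) * (2 * Fintype.card ι) := Nat.mul_le_mul hT hT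
    _ = 4 * Fintype.card ι ^ 2 := by ring

lemma Finset.abs_sum_le_card_mul {α : Type*} {s : Finset α} {f : α → ℝ} {B : ℝ}
    (h : ∀ a ∈ s, |f a| ≤ B) : |∑ a ∈ s, f a| ≤ #s * B :=
  (abs_sum_le_sum_abs f s).trans <| by simpa using sum_le_card_nsmul s _ B h

section Coulomb

variable {m : ℕ} (w : Fin m → ℕ) (y : Fin m → Bool → EuclideanSpace ℝ (Fin 3))

noncomputable def pairEnergy (q : (Fin m × Bool) × (Fin m × Bool)) : ℝ :=
  ionCharge w q.1 * ionCharge w q.2 / dist (y q.1.1 q.1.2) (y q.2.1 q.2.2)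

lemma coulombEnergy_eq_sum_pairEnergy (T : Finset (Fin m)) :
    coulombEnergy w y T = (∑ q ∈ (T ×ˢ univ).offDiag, pairEnergy w y q) / 2 := rfl

lemma abs_ionCharge (a : Fin m × Bool) : |ionCharge w a| = w a.1 := by
  unfold ionCharge
  split_ifs <;> simp

variable {w y}

/-- For `p = 0` both sides are `0`, through division by zero. -/
lemma pairEnergy_dipole {p : ℕ} {i : Fin m} (hw : w i ≠ 0)
    (hd : dist (y i false) (y i true) = (w i : ℝ) ^ 2 / p) :
    pairEnergy w y ((i, false), (i, true)) = -p ∧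
      pairEnergy w y ((i, true), (i, false)) = -p := by
  have hw' : (w i : ℝ) ≠ 0 := Nat.cast_ne_zero.mpr hw
  simp only [pairEnergy, ionCharge, Bool.false_eq_true, if_true, if_false, dist_comm (y i true),
    hd, div_div_eq_mul_div]
  constructor <;> field_simp

lemma abs_pairEnergy_le {W : ℕ} (hwW : ∀ i, w i ≤ W) {α : ℝ} (hα : 0 < α)
    {q : (Fin m × Bool) × (Fin m × Bool)} (hq : α ≤ dist (y q.1.1 q.1.2) (y q.2.1 q.2.2)) :
    |pairEnergy w y q| ≤ (W : ℝ) ^ 2 / α := by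
  have hcharge (a : Fin m × Bool) : |ionCharge w a| ≤ W := by
    rw [abs_ionCharge]; exact_mod_cast hwW a.1
  rw [pairEnergy, abs_div, abs_mul, abs_of_pos (hα.trans_le hq), sq]
  exact div_le_div₀ (by positivity)
    (mul_le_mul (hcharge _) (hcharge _) (abs_nonneg _) (by positivity)) hα hq

lemma abs_coulombEnergy_add_sum_le {p : Fin m → ℕ} {W : ℕ} (hwW : ∀ i, w i ≤ W)
    (hw : ∀ i, w i ≠ 0) (hdist : ∀ i, dist (y i false) (y i true) = (w i : ℝ) ^ 2 / p i)
    {α : ℝ} (hα : 0 < α) (hfar : ∀ i j, i ≠ j → ∀ b b', α ≤ dist (y i b) (y j b'))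
    (T : Finset (Fin m)) :
    |coulombEnergy w y T + ∑ i ∈ T, (p i : ℝ)| ≤ 4 * m ^ 2 * W ^ 2 / α / 2 := by
  set S := (T ×ˢ (univ : Finset Bool)).offDiag
  have hsame : ∑ q ∈ S with q.1.1 = q.2.1, pairEnergy w y q = -2 * ∑ i ∈ T, (p i : ℝ) := by
    rw [sum_offDiag_prod_bool_filter_fst_eq, mul_sum]
    refine sum_congr rfl fun i _ => ?_
    obtain ⟨h₁, h₂⟩ := pairEnergy_dipole (hw i) (hdist i)
    rw [h₁, h₂]; ring
  have hcross : |∑ q ∈ S with q.1.1 ≠ q.2.1, pairEnergy w y q| ≤ 4 * m ^ 2 * W ^ 2 / α := by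
    have hcard : (#(S.filter fun q => q.1.1 ≠ q.2.1) : ℝ) ≤ 4 * m ^ 2 := by
      have := (card_filter_le S (fun q => q.1.1 ≠ q.2.1)).trans (card_offDiag_prod_bool_le T)
      rw [Fintype.card_fin] at this
      exact_mod_cast this
    calc _ ≤ #(S.filter fun q => q.1.1 ≠ q.2.1) * ((W : ℝ) ^ 2 / α) :=
          abs_sum_le_card_mul fun q hq =>
            abs_pairEnergy_le hwW hα (hfar _ _ (mem_filter.mp hq).2 _ _)
      _ ≤ 4 * m ^ 2 * ((W : ℝ) ^ 2 / α) := by gcongr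
      _ = _ := by ring
  rw [coulombEnergy_eq_sum_pairEnergy, ← sum_filter_add_sum_filter_not S (fun q => q.1.1 = q.2.1)
    (pairEnergy w y), hsame]
  calc _ = |(∑ q ∈ S with q.1.1 ≠ q.2.1, pairEnergy w y q) / 2| := by congr 1; ring
    _ = |∑ q ∈ S with q.1.1 ≠ q.2.1, pairEnergy w y q| / 2 := by rw [abs_div, abs_two]
    _ ≤ _ := by gcongr

end Coulomb

theorem knapsack_coulomb_reduction_general (m : ℕ) (w p : Fin m → ℕ)
    (hw : ∀ i, 1 ≤ w i)
    (W : ℕ) (hW : W = Finset.univ.sup w) (c g : ℕ) (u : ℝ)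
    (hu' : u ≤ 1 / 2) (α : ℝ) (hα : 0 < α)
    (hαu : 4 * (m : ℝ) ^ 2 * (W : ℝ) ^ 2 / α < u)
    (y : Fin m → Bool → EuclideanSpace ℝ (Fin 3))
    (hdist : ∀ i, dist (y i false) (y i true) = (w i : ℝ) ^ 2 / (p i : ℝ))
    (hfar : ∀ i j : Fin m, i ≠ j → ∀ b b' : Bool, α ≤ dist (y i b) (y j b')) :
    (∃ T : Finset (Fin m), ∑ i ∈ T, w i ≤ c ∧
        coulombEnergy w y T ≤ -(g : ℝ) + u) ↔
      ∃ T : Finset (Fin m), ∑ i ∈ T, w i ≤ c ∧ g ≤ ∑ i ∈ T, p i := by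
  have hwW (i : Fin m) : w i ≤ W := hW ▸ le_sup (mem_univ i)
  have hclose (T : Finset (Fin m)) : |coulombEnergy w y T + ∑ i ∈ T, (p i : ℝ)| < u := by
    have hbound := abs_coulombEnergy_add_sum_le hwW (fun i => Nat.one_le_iff_ne_zero.mp (hw i))
      hdist hα hfar T
    have hnonneg : 0 ≤ 4 * (m : ℝ) ^ 2 * (W : ℝ) ^ 2 / α := by positivity
    linarith
  refine exists_congr fun T => and_congr_right fun _ => ?_
  have hT := abs_lt.mp (hclose T)
  constructor
  · intro hE
    have : (g : ℝ) < ∑ i ∈ T, p i + 1 := by push_cast; linarith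
    exact Nat.lt_add_one_iff.mp (by exact_mod_cast this)
  · intro hg
    have : (g : ℝ) ≤ ∑ i ∈ T, (p i : ℝ) := by exact_mod_cast hg
    linarith

/-- Correctness of the reduction from knapsack to at-least-`k`-charge removal under the
Coulomb potential: each item `i` is represented by a positive ion of charge `w i` and a
negative ion of charge `−(w i)` at mutual distance `(w i)²/(p i)` (hence mutual Coulomb
energy `−p i`), ions of distinct items being at distance at least `α`.  Then there is a
set `T` of items of total weight at most `c` whose ions have total Coulomb energy at most
`−g + u` iff there is a set `T` of items of total weight at most `c` and total value at
least `g`. -/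
theorem knapsack_coulomb_reduction (m : ℕ) (hm : 1 ≤ m) (w p : Fin m → ℕ)
    (hw : ∀ i, 1 ≤ w i) (hp : ∀ i, 1 ≤ p i)
    (W : ℕ) (hW : W = Finset.univ.sup w) (c g : ℕ) (u : ℝ) (hu : 0 < u)
    (hu' : u ≤ 1 / 2) (α : ℝ) (hα : 0 < α)
    (hαu : 4 * (m : ℝ) ^ 2 * (W : ℝ) ^ 2 / α < u)
    (y : Fin m → Bool → EuclideanSpace ℝ (Fin 3))
    (hdist : ∀ i, dist (y i false) (y i true) = (w i : ℝ) ^ 2 / (p i : ℝ))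
    (hfar : ∀ i j : Fin m, i ≠ j → ∀ b b' : Bool, α ≤ dist (y i b) (y j b')) :
    (∃ T : Finset (Fin m), ∑ i ∈ T, w i ≤ c ∧
        coulombEnergy w y T ≤ -(g : ℝ) + u) ↔
      ∃ T : Finset (Fin m), ∑ i ∈ T, w i ≤ c ∧ g ≤ ∑ i ∈ T, p i :=
  knapsack_coulomb_reduction_general m w p hw W hW c g u hu' α hα hαu y hdist hfar
end

section
/- For every natural number n ≥ 6 there exist nonnegative reals A₁₁, B₁₁, C₁₁, A₁₂, B₁₂, C₁₂ such that E₀ = −1 and the following three inequalities hold: (1) f(n) ≥ 1; (2) n²·|f(r)| ≤ 1 for every real r ≥ √2·n; (3) f(r) > 0 for every real r ≥ √2·n. -/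
/-- The total Buckingham–Coulomb interaction (per direction) between two unit-charge ion
pairs whose planar centres are at distance `r`, one ion of each pair at height `0` and
the other at height `1`. -/
noncomputable def pennyF (A11 B11 C11 A12 B12 C12 r : ℝ) : ℝ :=
  A11 * Real.exp (-(B11 * r)) - C11 / r ^ 6 + 1 / r +
    A12 * Real.exp (-(B12 * Real.sqrt (r ^ 2 + 1))) - C12 / (r ^ 2 + 1) ^ 3 -
    1 / Real.sqrt (r ^ 2 + 1)

/-- The internal Buckingham–Coulomb energy of a single pair: two opposite unit charges at
distance `1`. -/
noncomputable def pennyE0 (A12 B12 C12 : ℝ) : ℝ := A12 * Real.exp (-B12) - C12 - 1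

private lemma pennyF_val (n r : ℝ) :
    pennyF (Real.exp (10 * n)) 10 0 0 0 0 r
      = Real.exp (10 * n - 10 * r) + (1 / r - 1 / Real.sqrt (r ^ 2 + 1)) := by
  unfold pennyF
  rw [← Real.exp_add]
  ring_nf

private lemma g_nonneg {r : ℝ} (hr : 0 < r) :
    0 ≤ 1 / r - 1 / Real.sqrt (r ^ 2 + 1) := by
  have h1 : r ≤ Real.sqrt (r ^ 2 + 1) :=
    Real.le_sqrt hr.le (by positivity) |>.2 (by linarith)
  have h2 : 0 < Real.sqrt (r ^ 2 + 1) := lt_of_lt_of_le hr h1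
  have := one_div_le_one_div_of_le hr h1
  linarith

private lemma g_le {r : ℝ} (hr : 0 < r) :
    1 / r - 1 / Real.sqrt (r ^ 2 + 1) ≤ 1 / (2 * r ^ 3) := by
  set s := Real.sqrt (r ^ 2 + 1) with hs
  have h1 : r ≤ s := by
    exact hs ▸ (Real.le_sqrt hr.le (by positivity) |>.2 (by linarith))
  have h2 : 0 < s := lt_of_lt_of_le hr h1
  have hsq : s ^ 2 = r ^ 2 + 1 := Real.sq_sqrt (by positivity)
  rw [div_sub_div _ _ (ne_of_gt hr) (ne_of_gt h2), div_le_div_iff₀ (by positivity) (by positivity)]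
  nlinarith [mul_pos hr h2, sq_nonneg (s - r), sq_nonneg r]

/-- For every `n ≥ 6` there are nonnegative Buckingham parameters making the internal
pair energy `E₀` equal to `−1` and satisfying the three inequalities of the penny
construction: `f(n) ≥ 1`, `n²·|f(r)| ≤ 1` for all `r ≥ √2·n`, and `f(r) > 0` for all
`r ≥ √2·n`. -/
theorem penny_parameters_exist (n : ℕ) (hn : 6 ≤ n) :
    ∃ A11 B11 C11 A12 B12 C12 : ℝ,
      0 ≤ A11 ∧ 0 ≤ B11 ∧ 0 ≤ C11 ∧ 0 ≤ A12 ∧ 0 ≤ B12 ∧ 0 ≤ C12 ∧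
      pennyE0 A12 B12 C12 = -1 ∧
      1 ≤ pennyF A11 B11 C11 A12 B12 C12 n ∧
      (∀ r : ℝ, Real.sqrt 2 * n ≤ r →
        (n : ℝ) ^ 2 * |pennyF A11 B11 C11 A12 B12 C12 r| ≤ 1) ∧
      (∀ r : ℝ, Real.sqrt 2 * n ≤ r → 0 < pennyF A11 B11 C11 A12 B12 C12 r) := by
  have hn' : (6:ℝ) ≤ n := by exact_mod_cast hn
  have hnpos : (0:ℝ) < n := by linarith
  have hsqrt2 : (1.4:ℝ) ≤ Real.sqrt 2 := by
    rw [show (1.4:ℝ) = Real.sqrt (1.4 ^ 2) by rw [Real.sqrt_sq]; norm_num]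
    exact Real.sqrt_le_sqrt (by norm_num)
  -- generic facts for r ≥ √2 n
  have key : ∀ r : ℝ, Real.sqrt 2 * n ≤ r →
      0 < pennyF (Real.exp (10 * n)) 10 0 0 0 0 r ∧
      (n : ℝ) ^ 2 * pennyF (Real.exp (10 * n)) 10 0 0 0 0 r ≤ 1 := by
    intro r hr
    have hrn : (n : ℝ) ≤ r := by nlinarith
    have hr0 : 0 < r := lt_of_lt_of_le hnpos hrn
    rw [pennyF_val]
    constructor
    · have := g_nonneg hr0
      have := Real.exp_pos (10 * n - 10 * r)
      linarith
    · -- exponential bound: 10n - 10r ≤ -4n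
      have hexp : Real.exp (10 * n - 10 * r) ≤ Real.exp (-(4 * n)) := by
        apply Real.exp_le_exp.2
        nlinarith
      -- exp(4n) ≥ n^3 : exp(4n) = exp(4n/3)^3 ≥ (1+4n/3)^3 ≥ n^3
      have hcube : (n : ℝ) ^ 3 ≤ Real.exp (4 * n) := by
        have h1 : (n : ℝ) ≤ Real.exp (4 * n / 3) := by
          have := Real.add_one_le_exp (4 * (n:ℝ) / 3)
          linarith
        have h2 : Real.exp (4 * (n:ℝ)) = Real.exp (4 * n / 3) ^ 3 := by
          rw [← Real.exp_nat_mul]; push_cast; ring_nf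
        rw [h2]
        exact pow_le_pow_left₀ hnpos.le h1 3
      have hexp2 : Real.exp (-(4 * (n:ℝ))) ≤ 1 / n ^ 3 := by
        rw [Real.exp_neg, inv_eq_one_div]
        exact one_div_le_one_div_of_le (by positivity) hcube
      have hg := g_le hr0
      have hgr : 1 / (2 * r ^ 3) ≤ 1 / (2 * (n:ℝ) ^ 3) := by
        apply one_div_le_one_div_of_le (by positivity)
        have : (n:ℝ)^3 ≤ r^3 := pow_le_pow_left₀ hnpos.le hrn 3
        linarith
      have hf : Real.exp (10 * n - 10 * r) + (1 / r - 1 / Real.sqrt (r ^ 2 + 1))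
          ≤ 1 / n ^ 3 + 1 / (2 * n ^ 3) := by linarith
      have hmul : (n:ℝ) ^ 2 * (Real.exp (10 * n - 10 * r) + (1 / r - 1 / Real.sqrt (r ^ 2 + 1)))
          ≤ (n:ℝ) ^ 2 * (1 / (n:ℝ) ^ 3 + 1 / (2 * (n:ℝ) ^ 3)) :=
        mul_le_mul_of_nonneg_left hf (by positivity)
      have heq : (n:ℝ) ^ 2 * (1 / (n:ℝ) ^ 3 + 1 / (2 * (n:ℝ) ^ 3)) = 3 / (2 * (n:ℝ)) := by
        field_simp; ring
      have hfin : 3 / (2 * (n:ℝ)) ≤ 1 := by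
        rw [div_le_one (by linarith)]; linarith
      linarith
  refine ⟨Real.exp (10 * n), 10, 0, 0, 0, 0, (Real.exp_pos _).le, by norm_num, le_rfl,
    le_rfl, le_rfl, le_rfl, by simp [pennyE0], ?_, ?_, fun r hr => (key r hr).1⟩
  · rw [pennyF_val]
    have h1 : Real.exp (10 * (n:ℝ) - 10 * n) = 1 := by norm_num
    have := g_nonneg hnpos
    linarith
  · intro r hr
    obtain ⟨hpos, hle⟩ := key r hr
    rw [abs_of_pos hpos]
    exact hle
end
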